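/- arXiv:1606.01295 — 4 statements merged into one kernel-verified Lean document; each statement's English description precedes it below -/
import Mathlib

section
/- Let x ∈ ℝ^n, let T₀ be a set of s indices containing the s largest-magnitude entries of x, and let T̃₁,…,T̃_N ⊆ {1,…,n} (1 ≤ N ≤ n) be pairwise disjoint sets with union T̃, with |T̃ᵢ| = ρᵢs and |T̃ᵢ ∩ T₀| = αᵢρᵢs. Let 1 ≥ w₁ ≥ w₂ ≥ … ≥ w_N ≥ 0 and suppose a > 1 with as a positive integer and Σ_{i=1}^N ρᵢ(1−αᵢ) ≤ a. Suppose A ∈ ℝ^{m×n} satisfies the restricted isometry bound with constant δ_{as} at level as and with constant δ_{(a+1)s} at level (a+1)s, and that δ_{as} + (a/K_N²)·δ_{(a+1)s} < a/K_N² − 1. Let y = Ax + z with ‖z‖₂ ≤ ε, and let x̂ satisfy ‖Ax̂ − y‖₂ ≤ ε and ‖x̂‖_{1,w} ≤ ‖x‖_{1,w} (in particular, any minimizer of the weighted ℓ1 norm over the feasible set). Then ‖x̂ − x‖₂ ≤ C₀'ε + C₁'s^{−1/2}( (Σᵢwᵢ)‖x_{T₀ᶜ}‖₁ + (1−Σᵢwᵢ)‖x_{T̃ᶜ∩T₀ᶜ}‖₁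 − Σ_{i=1}^N Σ_{j≠i} w_j‖x_{T̃ᵢ∩T₀ᶜ}‖₁ ), where C₀' = 2(1 + K_N/√a)/(√(1−δ_{(a+1)s}) − (K_N/√a)√(1+δ_{as})) and C₁' = 2a^{−1/2}(√(1−δ_{(a+1)s}) + √(1+δ_{as}))/(√(1−δ_{(a+1)s}) − (K_N/√a)√(1+δ_{as})). -/
/-!
Write `h = xh - x`. The weighted norm is `∑ i, u i * |v i|` with `u = w k` on `T k` and `u = 1`
off their union, so minimality of `xh` gives the cone inequality
`‖h_{T₀ᶜ}‖_{1,w} ≤ ‖h_{T₀}‖_{1,w} + 2 ‖x_{T₀ᶜ}‖_{1,w}`, and `‖x_{T₀ᶜ}‖_{1,w}` is the quantity `D`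
of the bound. Adding the unweighted remainder, `‖h_{T₀ᶜ}‖₁ ≤ ∑ i, c i * |h i| + 2 D`, where the
coefficient `c` (`u` on `T₀`, `1 - u` off it) telescopes, with `w 0 = 1`, into
`w N • 𝟙_{T₀} + ∑ j, (w (j - 1) - w j) • 𝟙_{S j}`. Each `S j` has
`s (1 + ∑_{i ≥ j} (ρ i - 2 α i ρ i))` elements, at most `a s` of them off `T₀`, so Cauchy–Schwarz
gives `‖h_{T₀ᶜ}‖₁ ≤ K_N √s ‖h_{T₀ ∪ T₁}‖₂ + 2 D`, with `T₁` the `a s` largest entries of `h` off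
`T₀`. The classical RIP argument, shelling the rest of `T₀ᶜ` into blocks of `a s` entries, turns
this cone condition and `‖A h‖₂ ≤ 2 ε` into the error bound.
-/

open Finset

/-- The restriction of a vector to a set of indices: agrees with `x` on `S`, zero elsewhere. -/
noncomputable def restr {n : ℕ} (x : Fin n → ℝ) (S : Finset (Fin n)) : Fin n → ℝ :=
  fun i => if i ∈ S then x i else 0

/-- The ℓ1 norm of a vector in ℝ^n. -/
noncomputable def nrm1 {n : ℕ} (x : Fin n → ℝ) : ℝ := ∑ i, |x i|

/-- The ℓ2 (Euclidean) norm of a vector in ℝ^n. -/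
noncomputable def nrm2 {n : ℕ} (x : Fin n → ℝ) : ℝ := Real.sqrt (∑ i, (x i) ^ 2)

/-- The weighted ℓ1 norm associated with support-estimate sets `T 1, …, T N`
(with weights `w 1, …, w N`), where weight `1` is used off `⋃ i, T i`. -/
noncomputable def wl1 {n : ℕ} (N : ℕ) (T : ℕ → Finset (Fin n)) (w : ℕ → ℝ)
    (x : Fin n → ℝ) : ℝ :=
  ∑ i ∈ Finset.Icc 1 N, w i * nrm1 (restr x (T i)) +
    nrm1 (restr x ((Finset.Icc 1 N).biUnion T)ᶜ)

/-- `A` satisfies the restricted isometry bound with constant `δ` at sparsity level `k`. -/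
def RIPBound {m n : ℕ} (A : Matrix (Fin m) (Fin n) ℝ) (δ : ℝ) (k : ℕ) : Prop :=
  ∀ v : Fin n → ℝ, (Finset.univ.filter fun i => v i ≠ 0).card ≤ k →
    (1 - δ) * (nrm2 v) ^ 2 ≤ (nrm2 (A.mulVec v)) ^ 2 ∧
      (nrm2 (A.mulVec v)) ^ 2 ≤ (1 + δ) * (nrm2 v) ^ 2

/-- The constant `K_N` appearing in the multi-weight recovery guarantee. -/
noncomputable def KN (N : ℕ) (w ρ α : ℕ → ℝ) : ℝ :=
  w N + (1 - w 1) * Real.sqrt (1 + ∑ i ∈ Finset.Icc 1 N, (ρ i - 2 * α i * ρ i)) +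
    ∑ j ∈ Finset.Icc 2 N, (w (j - 1) - w j) *
      Real.sqrt (1 + ∑ i ∈ Finset.Icc j N, (ρ i - 2 * α i * ρ i))

/-- The quantity `D` appearing in the multi-weight error bounds. -/
noncomputable def DD {n : ℕ} (N : ℕ) (T : ℕ → Finset (Fin n)) (T₀ : Finset (Fin n))
    (w : ℕ → ℝ) (x : Fin n → ℝ) : ℝ :=
  (∑ i ∈ Finset.Icc 1 N, w i) * nrm1 (restr x T₀ᶜ) +
    (1 - ∑ i ∈ Finset.Icc 1 N, w i) *
      nrm1 (restr x (((Finset.Icc 1 N).biUnion T)ᶜ ∩ T₀ᶜ)) -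
    ∑ i ∈ Finset.Icc 1 N, (∑ j ∈ (Finset.Icc 1 N).erase i, w j) *
      nrm1 (restr x (T i ∩ T₀ᶜ))

/-- The set `S_j = (T₀ ∪ ⋃_{i=j}^N T̃ᵢ) \ ⋃_{i=j}^N (T̃ᵢ ∩ T₀)`. -/
def SS {n : ℕ} (N : ℕ) (T : ℕ → Finset (Fin n)) (T₀ : Finset (Fin n)) (j : ℕ) :
    Finset (Fin n) :=
  (T₀ ∪ (Finset.Icc j N).biUnion T) \ (Finset.Icc j N).biUnion (fun i => T i ∩ T₀)

section Restriction

variable {n : ℕ}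

lemma sum_restr (v : Fin n → ℝ) (S : Finset (Fin n)) (g : Fin n → ℝ → ℝ)
    (hg : ∀ i, g i 0 = 0) : ∑ i, g i (restr v S i) = ∑ i ∈ S, g i (v i) := by
  rw [← univ_inter S, ← Finset.sum_ite_mem]
  exact sum_congr rfl fun i _ => by by_cases hi : i ∈ S <;> simp [restr, hi, hg]

lemma nrm1_restr (v : Fin n → ℝ) (S : Finset (Fin n)) :
    nrm1 (restr v S) = ∑ i ∈ S, |v i| :=
  sum_restr v S (fun _ t => |t|) fun _ => abs_zero

lemma nrm1_restr_nonneg (v : Fin n → ℝ) (S : Finset (Fin n)) : 0 ≤ nrm1 (restr v S) :=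
  sum_nonneg fun _ _ => abs_nonneg _

lemma nrm2_restr (v : Fin n → ℝ) (S : Finset (Fin n)) :
    nrm2 (restr v S) = √(∑ i ∈ S, v i ^ 2) :=
  congrArg _ (sum_restr v S (fun _ t => t ^ 2) fun _ => zero_pow two_ne_zero)

lemma nrm2_nonneg (v : Fin n → ℝ) : 0 ≤ nrm2 v := Real.sqrt_nonneg _

lemma nrm2_eq_norm (v : Fin n → ℝ) : nrm2 v = ‖WithLp.toLp 2 v‖ := by
  simp [nrm2, EuclideanSpace.norm_eq]

lemma nrm2_add_le (f g : Fin n → ℝ) : nrm2 (f + g) ≤ nrm2 f + nrm2 g := by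
  simpa only [nrm2_eq_norm, WithLp.toLp_add] using norm_add_le _ _

lemma nrm2_sub_le (f g : Fin n → ℝ) : nrm2 (f - g) ≤ nrm2 f + nrm2 g := by
  simpa only [nrm2_eq_norm, WithLp.toLp_sub] using norm_sub_le _ _

lemma nrm1_restr_le_sqrt_card_mul_nrm2 (v : Fin n → ℝ) (S : Finset (Fin n)) :
    nrm1 (restr v S) ≤ √S.card * nrm2 (restr v S) := by
  rw [nrm1_restr, nrm2_restr, ← Real.sqrt_mul (Nat.cast_nonneg _)]
  refine Real.le_sqrt_of_sq_le ?_
  simpa only [sq_abs] using sq_sum_le_card_mul_sum_sq (s := S) (f := fun i => |v i|)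

lemma nrm2_restr_le_sqrt_card_mul {v : Fin n → ℝ} {S : Finset (Fin n)} {b : ℝ} (hb : 0 ≤ b)
    (hv : ∀ i ∈ S, |v i| ≤ b) : nrm2 (restr v S) ≤ √S.card * b := by
  rw [nrm2_restr, ← Real.sqrt_sq hb, ← Real.sqrt_mul (Nat.cast_nonneg _)]
  refine Real.sqrt_le_sqrt ?_
  calc ∑ i ∈ S, v i ^ 2 ≤ ∑ _i ∈ S, b ^ 2 :=
        sum_le_sum fun i hi => sq_le_sq' (abs_le.1 (hv i hi)).1 (abs_le.1 (hv i hi)).2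
    _ = S.card * b ^ 2 := by rw [sum_const, nsmul_eq_mul]

lemma restr_union {v : Fin n → ℝ} {S U : Finset (Fin n)} (h : Disjoint S U) :
    restr v (S ∪ U) = restr v S + restr v U := by
  funext i
  by_cases hS : i ∈ S
  · simp [restr, hS, Finset.disjoint_left.1 h hS]
  · by_cases hU : i ∈ U <;> simp [restr, hS, hU]

lemma restr_restr (v : Fin n → ℝ) (S U : Finset (Fin n)) :
    restr (restr v S) U = restr v (U ∩ S) := by
  funext i
  by_cases hS : i ∈ S <;> by_cases hU : i ∈ U <;> simp [restr, hS, hU]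

lemma restr_univ (v : Fin n → ℝ) : restr v univ = v := by
  funext i; simp [restr]

lemma card_filter_restr_ne_zero_le (v : Fin n → ℝ) (S : Finset (Fin n)) :
    (univ.filter fun i => restr v S i ≠ 0).card ≤ S.card :=
  card_le_card fun i hi => by
    by_contra hiS
    exact (mem_filter.1 hi).2 (by simp [restr, hiS])

end Restriction

open Matrix

section RIP

variable {m n : ℕ} {A : Matrix (Fin m) (Fin n) ℝ} {δ : ℝ} {k : ℕ}

lemma RIPBound.nrm2_mulVec_le (hA : RIPBound A δ k) {v : Fin n → ℝ}
    (hv : (univ.filter fun i => v i ≠ 0).card ≤ k) : nrm2 (A *ᵥ v) ≤ √(1 + δ) * nrm2 v := by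
  rw [← Real.sqrt_sq (nrm2_nonneg (A *ᵥ v)), ← Real.sqrt_sq (nrm2_nonneg v),
    ← Real.sqrt_mul' _ (sq_nonneg _)]
  exact Real.sqrt_le_sqrt (hA v hv).2

lemma RIPBound.sqrt_mul_nrm2_le (hA : RIPBound A δ k) {v : Fin n → ℝ}
    (hv : (univ.filter fun i => v i ≠ 0).card ≤ k) : √(1 - δ) * nrm2 v ≤ nrm2 (A *ᵥ v) := by
  rw [← Real.sqrt_sq (nrm2_nonneg (A *ᵥ v)), ← Real.sqrt_sq (nrm2_nonneg v),
    ← Real.sqrt_mul' _ (sq_nonneg _)]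
  exact Real.sqrt_le_sqrt (hA v hv).1

end RIP

lemma sum_le_sum_of_forall_le_of_card_le {ι : Type*} {f : ι → ℝ} {A B : Finset ι}
    (hf : ∀ i, 0 ≤ f i) (hAB : ∀ i ∈ A, ∀ j ∈ B, f i ≤ f j) (hcard : A.card ≤ B.card) :
    ∑ i ∈ A, f i ≤ ∑ j ∈ B, f j := by
  rcases A.eq_empty_or_nonempty with rfl | hA
  · simpa using sum_nonneg fun j _ => hf j
  obtain ⟨i₀, hi₀, hmax⟩ := exists_max_image A f hA
  calc ∑ i ∈ A, f i ≤ A.card • f i₀ := sum_le_card_nsmul A f _ hmax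
    _ ≤ B.card • f i₀ := nsmul_le_nsmul_left (hf i₀) hcard
    _ ≤ ∑ j ∈ B, f j := card_nsmul_le_sum B f _ (hAB i₀ hi₀)

structure IsTopSet {ι : Type*} [DecidableEq ι] (f : ι → ℝ) (S C : Finset ι) : Prop where
  subset : C ⊆ S
  le : ∀ i ∈ S \ C, ∀ j ∈ C, f i ≤ f j

section TopSet

variable {ι : Type*} [DecidableEq ι] {f : ι → ℝ} {S C : Finset ι}

lemma exists_isTopSet (f : ι → ℝ) (S : Finset ι) {k : ℕ} (hk : k ≤ S.card) :
    ∃ C, IsTopSet f S C ∧ C.card = k := by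
  induction k with
  | zero => exact ⟨∅, ⟨empty_subset S, by simp⟩, rfl⟩
  | succ k ih =>
    obtain ⟨C, hC, rfl⟩ := ih (Nat.le_of_succ_le hk)
    have hne : (S \ C).Nonempty := by
      rw [← card_pos, card_sdiff_of_subset hC.subset]
      omega
    obtain ⟨i₀, hi₀, hmax⟩ := exists_max_image (S \ C) f hne
    refine ⟨insert i₀ C, ⟨insert_subset (mem_sdiff.1 hi₀).1 hC.subset, fun i hi j hj => ?_⟩,
      card_insert_of_notMem (mem_sdiff.1 hi₀).2⟩
    have hiSC : i ∈ S \ C := by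
      simp only [mem_sdiff, mem_insert, not_or] at hi ⊢
      exact ⟨hi.1, hi.2.2⟩
    rcases mem_insert.1 hj with rfl | hjC
    · exact hmax i hiSC
    · exact hC.le i hiSC j hjC

lemma IsTopSet.sum_le (hC : IsTopSet f S C) (hf : ∀ i, 0 ≤ f i) {V : Finset ι} (hV : V ⊆ S)
    (hVC : V.card ≤ C.card) : ∑ i ∈ V, f i ≤ ∑ i ∈ C, f i := by
  rw [← sum_inter_add_sum_sdiff V C, ← sum_inter_add_sum_sdiff C V, inter_comm C V]
  have hcard := card_inter_add_card_sdiff V C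
  have hcard' := card_inter_add_card_sdiff C V
  rw [inter_comm C V] at hcard'
  refine add_le_add le_rfl (sum_le_sum_of_forall_le_of_card_le hf (fun i hi j hj => ?_) (by omega))
  exact hC.le i (mem_sdiff.2 ⟨hV (mem_sdiff.1 hi).1, (mem_sdiff.1 hi).2⟩) j (mem_sdiff.1 hj).1

lemma IsTopSet.le_sum_div_card (hC : IsTopSet f S C) (hne : C.Nonempty) {i : ι}
    (hi : i ∈ S \ C) : f i ≤ (∑ j ∈ C, f j) / C.card := by
  rw [le_div_iff₀ (by exact_mod_cast hne.card_pos), mul_comm, ← nsmul_eq_mul]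
  exact card_nsmul_le_sum C f _ (hC.le i hi)

end TopSet

section Tail

variable {n : ℕ} {F : (Fin n → ℝ) → ℝ} {c : ℕ} {e : ℝ} {v : Fin n → ℝ}

/-- Shelling: cut `W` into consecutive blocks of `c` largest entries; the entries of each
block are bounded by the mean absolute value of the previous one. -/
lemma apply_restr_le_of_abs_le (hF : ∀ f g, F (f + g) ≤ F f + F g) (hc : 0 < c) (he : 0 ≤ e)
    (hFv : ∀ S : Finset (Fin n), S.card ≤ c → F (restr v S) ≤ e * nrm2 (restr v S))
    (W : Finset (Fin n)) {b : ℝ} (hb : 0 ≤ b) (hW : ∀ i ∈ W, |v i| ≤ b) :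
    F (restr v W) ≤ e * (√c * b + nrm1 (restr v W) / √c) := by
  induction W using Finset.strongInduction generalizing b with
  | H W ih =>
  have hblock : ∀ S ⊆ W, S.card ≤ c → F (restr v S) ≤ e * (√c * b) := fun S hSW hSc =>
    (hFv S hSc).trans <| mul_le_mul_of_nonneg_left
      ((nrm2_restr_le_sqrt_card_mul hb fun i hi => hW i (hSW hi)).trans
        (by gcongr)) he
  have hc' : (0 : ℝ) < √c := Real.sqrt_pos.2 (by exact_mod_cast hc)
  by_cases hWc : W.card ≤ c
  · refine (hblock W subset_rfl hWc).trans (mul_le_mul_of_nonneg_left ?_ he)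
    exact le_add_of_nonneg_right (div_nonneg (nrm1_restr_nonneg v W) hc'.le)
  obtain ⟨C, hC, hCcard⟩ := exists_isTopSet (fun i => |v i|) W (le_of_not_ge hWc)
  have hCne : C.Nonempty := card_pos.1 (hCcard ▸ hc)
  have hrest := ih (W \ C) (sdiff_ssubset hC.subset hCne) (b := nrm1 (restr v C) / c)
    (div_nonneg (nrm1_restr_nonneg v C) c.cast_nonneg)
    fun i hi => by simpa only [nrm1_restr, hCcard] using hC.le_sum_div_card hCne hi
  have hdisj : Disjoint C (W \ C) := disjoint_sdiff
  have hWC : C ∪ W \ C = W := union_sdiff_of_subset hC.subset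
  have hnrm1 : nrm1 (restr v W) = nrm1 (restr v C) + nrm1 (restr v (W \ C)) := by
    simp only [nrm1_restr, ← sum_union hdisj, hWC]
  calc F (restr v W) ≤ F (restr v C) + F (restr v (W \ C)) := by
        simpa only [← restr_union hdisj, hWC] using hF (restr v C) (restr v (W \ C))
    _ ≤ e * (√c * b) + e * (√c * (nrm1 (restr v C) / c) + nrm1 (restr v (W \ C)) / √c) :=
        add_le_add (hblock C hC.subset hCcard.le) hrest
    _ = e * (√c * b + nrm1 (restr v W) / √c) := by
        rw [hnrm1, mul_div_left_comm, Real.sqrt_div_self', mul_one_div]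
        ring

lemma apply_restr_sdiff_le_of_isTopSet (hF : ∀ f g, F (f + g) ≤ F f + F g) (hc : 0 < c)
    (he : 0 ≤ e)
    (hFv : ∀ S : Finset (Fin n), S.card ≤ c → F (restr v S) ≤ e * nrm2 (restr v S))
    {U C : Finset (Fin n)} (hC : IsTopSet (fun i => |v i|) U C) (hCcard : C.card = min c U.card) :
    F (restr v (U \ C)) ≤ e * (nrm1 (restr v U) / √c) := by
  rcases le_total U.card c with hUc | hcU
  · have hCU : C = U := eq_of_subset_of_card_le hC.subset (by omega)
    rw [hCU, sdiff_self]
    refine (hFv ∅ (by simp)).trans ?_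
    simpa [nrm2_restr] using mul_nonneg he (div_nonneg (nrm1_restr_nonneg v U) (Real.sqrt_nonneg c))
  have hCcard' : C.card = c := by omega
  have hCne : C.Nonempty := card_pos.1 (by omega)
  have hUC : C ∪ U \ C = U := union_sdiff_of_subset hC.subset
  have hnrm1 : nrm1 (restr v U) = nrm1 (restr v C) + nrm1 (restr v (U \ C)) := by
    simp only [nrm1_restr, ← sum_union disjoint_sdiff, hUC]
  refine (apply_restr_le_of_abs_le hF hc he hFv (U \ C)
    (div_nonneg (nrm1_restr_nonneg v C) c.cast_nonneg)
    fun i hi => by simpa only [nrm1_restr, hCcard'] using hC.le_sum_div_card hCne hi).trans_eq ?_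
  rw [hnrm1, mul_div_left_comm, Real.sqrt_div_self', mul_one_div]
  ring

end Tail

lemma le_div_of_head_tail_bounds {H P Q R η d e κ : ℝ} (he : 0 ≤ e) (hκ : 0 ≤ κ)
    (hden : κ * e < d) (hH : H ≤ P + Q) (hP : d * P ≤ η + e * Q) (hQ : Q ≤ κ * P + R) :
    H ≤ ((1 + κ) * η + (d + e) * R) / (d - κ * e) := by
  have hd : 0 ≤ d := (mul_nonneg hκ he).trans hden.le
  rw [le_div_iff₀ (by linarith)]
  nlinarith [mul_le_mul_of_nonneg_left hQ he, mul_le_mul_of_nonneg_left hQ hd,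
    mul_le_mul_of_nonneg_left hP hκ, mul_le_mul_of_nonneg_right hH (by linarith : 0 ≤ d - κ * e)]

section Cone

variable {m n c s : ℕ} {h : Fin n → ℝ} {T₀ T₁ : Finset (Fin n)}

lemma IsTopSet.nrm2_restr_le (hT₁ : IsTopSet (fun i => |h i|) T₀ᶜ T₁)
    (hT₁card : T₁.card = min c T₀ᶜ.card) {V : Finset (Fin n)} (hV : (V \ T₀).card ≤ c) :
    nrm2 (restr h V) ≤ nrm2 (restr h (T₀ ∪ T₁)) := by
  have hsq : IsTopSet (fun i => h i ^ 2) T₀ᶜ T₁ :=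
    ⟨hT₁.subset, fun i hi j hj => sq_le_sq.2 (hT₁.le i hi j hj)⟩
  have hdisj : Disjoint T₀ T₁ := disjoint_of_subset_right hT₁.subset disjoint_compl_right
  rw [nrm2_restr, nrm2_restr, sum_union hdisj, ← sum_inter_add_sum_sdiff V T₀]
  refine Real.sqrt_le_sqrt (add_le_add ?_ ?_)
  · exact sum_le_sum_of_subset_of_nonneg inter_subset_right fun i _ _ => sq_nonneg _
  · refine hsq.sum_le (fun i => sq_nonneg _) (fun i hi => ?_) ?_
    · exact mem_compl.2 (mem_sdiff.1 hi).2
    · exact hT₁card ▸ le_min hV (card_le_card fun i hi => mem_compl.2 (mem_sdiff.1 hi).2)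

theorem nrm2_le_of_cone {A : Matrix (Fin m) (Fin n) ℝ} {δ₁ δ₂ : ℝ} (hA₁ : RIPBound A δ₁ c)
    (hA₂ : RIPBound A δ₂ (c + s)) (hc : 0 < c) (hT₀ : T₀.card ≤ s)
    (hT₁ : IsTopSet (fun i => |h i|) T₀ᶜ T₁) (hT₁card : T₁.card = min c T₀ᶜ.card)
    {κ R η : ℝ} (hκ : 0 ≤ κ) (hden : κ * √(1 + δ₁) < √(1 - δ₂)) (hAh : nrm2 (A *ᵥ h) ≤ η)
    (hcone : nrm1 (restr h T₀ᶜ) / √c ≤ κ * nrm2 (restr h (T₀ ∪ T₁)) + R) :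
    nrm2 h ≤ ((1 + κ) * η + (√(1 - δ₂) + √(1 + δ₁)) * R) / (√(1 - δ₂) - κ * √(1 + δ₁)) := by
  have hdisj : Disjoint (T₀ ∪ T₁) (T₀ᶜ \ T₁) :=
    disjoint_union_left.2 ⟨disjoint_of_subset_right sdiff_subset disjoint_compl_right,
      disjoint_sdiff⟩
  have hunion : (T₀ ∪ T₁) ∪ (T₀ᶜ \ T₁) = univ := by
    ext i; by_cases hi₀ : i ∈ T₀ <;> by_cases hi₁ : i ∈ T₁ <;> simp [hi₀, hi₁]
  have hsplit : h = restr h (T₀ ∪ T₁) + restr h (T₀ᶜ \ T₁) := by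
    rw [← restr_union hdisj, hunion, restr_univ]
  have htail_nrm2 : nrm2 (restr h (T₀ᶜ \ T₁)) ≤ 1 * (nrm1 (restr h T₀ᶜ) / √c) :=
    apply_restr_sdiff_le_of_isTopSet nrm2_add_le hc zero_le_one
      (fun S _ => (one_mul _).ge) hT₁ hT₁card
  have htail_A : nrm2 (A *ᵥ restr h (T₀ᶜ \ T₁)) ≤ √(1 + δ₁) * (nrm1 (restr h T₀ᶜ) / √c) :=
    apply_restr_sdiff_le_of_isTopSet (F := fun f => nrm2 (A *ᵥ f))
      (fun f g => by simpa only [mulVec_add] using nrm2_add_le _ _) hc (Real.sqrt_nonneg _)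
      (fun S hS => hA₁.nrm2_mulVec_le ((card_filter_restr_ne_zero_le h S).trans hS))
      hT₁ hT₁card
  have hhead : √(1 - δ₂) * nrm2 (restr h (T₀ ∪ T₁)) ≤ nrm2 (A *ᵥ restr h (T₀ ∪ T₁)) :=
    hA₂.sqrt_mul_nrm2_le <| (card_filter_restr_ne_zero_le h _).trans <|
      (card_union_le T₀ T₁).trans (by omega)
  have hhead_eq : A *ᵥ restr h (T₀ ∪ T₁) = A *ᵥ h - A *ᵥ restr h (T₀ᶜ \ T₁) := by
    rw [← mulVec_sub]; nth_rewrite 2 [hsplit]; rw [add_sub_cancel_right]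
  refine le_div_of_head_tail_bounds (Real.sqrt_nonneg _) hκ hden ?_ ?_ hcone
  · calc nrm2 h ≤ nrm2 (restr h (T₀ ∪ T₁)) + nrm2 (restr h (T₀ᶜ \ T₁)) := by
          nth_rewrite 1 [hsplit]; exact nrm2_add_le _ _
      _ ≤ _ := by linarith
  · calc _ ≤ nrm2 (A *ᵥ restr h (T₀ ∪ T₁)) := hhead
      _ ≤ nrm2 (A *ᵥ h) + nrm2 (A *ᵥ restr h (T₀ᶜ \ T₁)) := hhead_eq ▸ nrm2_sub_le _ _
      _ ≤ _ := add_le_add hAh htail_A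

end Cone

lemma sum_compl_mul_abs_le {ι : Type*} [Fintype ι] [DecidableEq ι] {u x h : ι → ℝ}
    (hu : ∀ i, 0 ≤ u i) (hmin : ∑ i, u i * |x i + h i| ≤ ∑ i, u i * |x i|) (T₀ : Finset ι) :
    ∑ i ∈ T₀ᶜ, u i * |h i| ≤ ∑ i ∈ T₀, u i * |h i| + 2 * ∑ i ∈ T₀ᶜ, u i * |x i| := by
  have hin : ∑ i ∈ T₀, (u i * |x i| - u i * |h i|) ≤ ∑ i ∈ T₀, u i * |x i + h i| :=
    sum_le_sum fun i _ => by
      rw [← mul_sub]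
      refine mul_le_mul_of_nonneg_left ?_ (hu i)
      simpa using abs_sub_abs_le_abs_sub (x i) (-h i)
  have hout : ∑ i ∈ T₀ᶜ, (u i * |h i| - u i * |x i|) ≤ ∑ i ∈ T₀ᶜ, u i * |x i + h i| :=
    sum_le_sum fun i _ => by
      rw [← mul_sub, add_comm]
      refine mul_le_mul_of_nonneg_left ?_ (hu i)
      simpa using abs_sub_abs_le_abs_sub (h i) (-x i)
  rw [← sum_add_sum_compl T₀, ← sum_add_sum_compl T₀ fun i => u i * |x i|] at hmin
  rw [sum_sub_distrib] at hin hout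
  linarith

section Layers

variable {n N s j : ℕ} {T : ℕ → Finset (Fin n)} {T₀ : Finset (Fin n)}

lemma card_SS_add (hT : (Icc j N : Set ℕ).PairwiseDisjoint T) :
    (SS N T T₀ j).card + 2 * ∑ k ∈ Icc j N, (T k ∩ T₀).card =
      T₀.card + ∑ k ∈ Icc j N, (T k).card := by
  set B := (Icc j N).biUnion T
  have hB' : (Icc j N).biUnion (fun k => T k ∩ T₀) = T₀ ∩ B := by rw [← biUnion_inter, inter_comm]
  have hsub : T₀ ∩ B ⊆ T₀ ∪ B := inter_subset_left.trans subset_union_left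
  have hunion := card_union_add_card_inter T₀ B
  have hinter := card_le_card hsub
  have hBcard : B.card = ∑ k ∈ Icc j N, (T k).card := card_biUnion hT
  have hB'card : (T₀ ∩ B).card = ∑ k ∈ Icc j N, (T k ∩ T₀).card :=
    hB' ▸ card_biUnion (hT.mono fun _ => inter_subset_left)
  rw [SS, hB', card_sdiff_of_subset hsub]
  omega

lemma cast_card_SS (hT : (Icc 1 N : Set ℕ).PairwiseDisjoint T) (hT₀ : T₀.card = s)
    {ρ α : ℕ → ℝ} (hρ : ∀ i ∈ Icc 1 N, ((T i).card : ℝ) = ρ i * s)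
    (hα : ∀ i ∈ Icc 1 N, ((T i ∩ T₀).card : ℝ) = α i * (ρ i * s)) (hj : 1 ≤ j) :
    ((SS N T T₀ j).card : ℝ) = s * (1 + ∑ i ∈ Icc j N, (ρ i - 2 * α i * ρ i)) := by
  have hsub : Icc j N ⊆ Icc 1 N := Icc_subset_Icc_left hj
  have hcard : ((SS N T T₀ j).card : ℝ) + 2 * ∑ k ∈ Icc j N, ((T k ∩ T₀).card : ℝ) =
      T₀.card + ∑ k ∈ Icc j N, ((T k).card : ℝ) := by
    exact_mod_cast card_SS_add (hT.subset (by exact_mod_cast hsub))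
  rw [sum_congr rfl fun k hk => hα k (hsub hk), sum_congr rfl fun k hk => hρ k (hsub hk),
    hT₀] at hcard
  have hsum : s * ∑ i ∈ Icc j N, (ρ i - 2 * α i * ρ i) =
      ∑ k ∈ Icc j N, ρ k * s - 2 * ∑ k ∈ Icc j N, α k * (ρ k * s) := by
    rw [mul_sum, mul_sum, ← sum_sub_distrib]
    exact sum_congr rfl fun k _ => by ring
  linarith

lemma card_SS_sdiff_le (hj : 1 ≤ j) :
    (SS N T T₀ j \ T₀).card ≤ ∑ k ∈ Icc 1 N, (T k \ T₀).card := by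
  refine (card_le_card fun i hi => ?_).trans card_biUnion_le
  obtain ⟨hiSS, hi₀⟩ := mem_sdiff.1 hi
  obtain ⟨k, hk, hik⟩ := mem_biUnion.1 (((mem_union.1 (mem_sdiff.1 hiSS).1).resolve_left hi₀))
  exact mem_biUnion.2 ⟨k, Icc_subset_Icc_left hj hk, mem_sdiff.2 ⟨hik, hi₀⟩⟩

lemma card_SS_sdiff_le_of_sum_le {ρ α : ℕ → ℝ} (hρ : ∀ i ∈ Icc 1 N, ((T i).card : ℝ) = ρ i * s)
    (hα : ∀ i ∈ Icc 1 N, ((T i ∩ T₀).card : ℝ) = α i * (ρ i * s)) {a : ℝ}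
    (hsum : ∑ i ∈ Icc 1 N, ρ i * (1 - α i) ≤ a) {as : ℕ} (hasval : (as : ℝ) = a * s)
    (hj : 1 ≤ j) : (SS N T T₀ j \ T₀).card ≤ as := by
  have hcard : ∑ k ∈ Icc 1 N, ((T k \ T₀).card : ℝ) = s * ∑ k ∈ Icc 1 N, ρ k * (1 - α k) := by
    rw [mul_sum]
    refine sum_congr rfl fun k hk => ?_
    have := card_sdiff_add_card_inter (T k) T₀
    have hR : ((T k \ T₀).card : ℝ) + ((T k ∩ T₀).card : ℝ) = (T k).card := by exact_mod_cast this
    rw [hρ k hk, hα k hk] at hR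
    linarith
  have hle : ((SS N T T₀ j \ T₀).card : ℝ) ≤ as := by
    calc ((SS N T T₀ j \ T₀).card : ℝ) ≤ ∑ k ∈ Icc 1 N, ((T k \ T₀).card : ℝ) := by
          exact_mod_cast card_SS_sdiff_le hj
      _ ≤ s * a := hcard ▸ mul_le_mul_of_nonneg_left hsum s.cast_nonneg
      _ = as := by rw [hasval, mul_comm]
  exact_mod_cast hle

end Layers

lemma sum_Ioc_sub_eq {M : Type*} [AddCommGroup M] (f : ℕ → M) {a b : ℕ} (hab : a ≤ b) :
    ∑ j ∈ Ioc a b, (f (j - 1) - f j) = f a - f b := by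
  induction b, hab using Nat.le_induction with
  | base => simp
  | succ b hab ih => rw [sum_Ioc_succ_top hab, ih, Nat.add_sub_cancel]; abel

/-- Telescoping: as `W 0 = 1`, the layer weights `W (j - 1) - W j` sum to `W l - W N` over
`l < j ≤ N` and to `1 - W l` over `1 ≤ j ≤ l`. -/
lemma ite_eq_ite_add_sum_Icc (W : ℕ → ℝ) (hW0 : W 0 = 1) {l N : ℕ} (hl : l ≤ N) (p : Prop)
    [Decidable p] :
    (if p then W l else 1 - W l) =
      (if p then W N else 0) + ∑ j ∈ Icc 1 N, if (p ↔ l < j) then W (j - 1) - W j else 0 := by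
  by_cases hp : p
  · have hIoc : (Icc 1 N).filter (fun j => l < j) = Ioc l N := by ext j; simp; omega
    simp only [hp, if_true, true_iff]
    rw [← sum_filter, hIoc, sum_Ioc_sub_eq W hl]
    ring
  · have hIoc : (Icc 1 N).filter (fun j => ¬l < j) = Ioc 0 l := by ext j; simp; omega
    simp only [hp, if_false, false_iff]
    rw [← sum_filter, hIoc, sum_Ioc_sub_eq W (Nat.zero_le l), hW0]
    ring

def levelWeight (w : ℕ → ℝ) : ℕ → ℝ := Function.update w 0 1

@[simp]
lemma levelWeight_zero (w : ℕ → ℝ) : levelWeight w 0 = 1 := Function.update_self 0 1 w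

lemma levelWeight_of_ne_zero (w : ℕ → ℝ) {k : ℕ} (hk : k ≠ 0) : levelWeight w k = w k :=
  Function.update_of_ne hk 1 w

lemma antitoneOn_levelWeight {w : ℕ → ℝ} {N : ℕ} (hw : AntitoneOn w (Set.Icc 1 N))
    (hw1 : w 1 ≤ 1) : AntitoneOn (levelWeight w) (Set.Iic N) := by
  intro i hi j hj hij
  simp only [Set.mem_Iic] at hi hj
  rcases Nat.eq_zero_or_pos j with rfl | hj0
  · obtain rfl : i = 0 := Nat.le_zero.1 hij
    exact le_rfl
  rw [levelWeight_of_ne_zero w hj0.ne']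
  rcases Nat.eq_zero_or_pos i with rfl | hi0
  · simpa using (hw ⟨le_rfl, hj0.trans_le hj⟩ ⟨hj0, hj⟩ hj0).trans hw1
  · rw [levelWeight_of_ne_zero w hi0.ne']
    exact hw ⟨hi0, hi⟩ ⟨hi0.trans_le hij, hj⟩ hij

lemma KN_eq_sum (N : ℕ) (w ρ α : ℕ → ℝ) (hN1 : 1 ≤ N) :
    KN N w ρ α = w N + ∑ j ∈ Icc 1 N,
      (levelWeight w (j - 1) - levelWeight w j) *
        √(1 + ∑ i ∈ Icc j N, (ρ i - 2 * α i * ρ i)) := by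
  have hIcc : Icc 1 N = insert 1 (Icc 2 N) := by
    ext j; simp only [mem_Icc, mem_insert]; omega
  conv_rhs => rw [hIcc, sum_insert (by simp)]
  have hrest : ∀ j ∈ Icc 2 N, levelWeight w (j - 1) - levelWeight w j =
      w (j - 1) - w j := fun j hj => by
    have hj' := mem_Icc.1 hj
    rw [levelWeight_of_ne_zero w (by omega), levelWeight_of_ne_zero w (by omega)]
  rw [KN, sum_congr rfl fun j hj => congrArg (· * _) (hrest j hj)]
  simp only [Nat.sub_self, levelWeight_zero, levelWeight_of_ne_zero w one_ne_zero]
  ring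

lemma KN_nonneg {N : ℕ} {w : ℕ → ℝ} (ρ α : ℕ → ℝ) (hN1 : 1 ≤ N)
    (hW : AntitoneOn (levelWeight w) (Set.Iic N)) (hwN : 0 ≤ w N) : 0 ≤ KN N w ρ α := by
  rw [KN_eq_sum N w ρ α hN1]
  refine add_nonneg hwN (sum_nonneg fun j hj => mul_nonneg ?_ (Real.sqrt_nonneg _))
  have hj' := mem_Icc.1 hj
  exact sub_nonneg.2 (hW (Set.mem_Iic.2 (by omega)) (Set.mem_Iic.2 hj'.2) (Nat.sub_le j 1))

lemma div_sqrt_mul_sqrt_lt {K a δ₁ δ₂ : ℝ} (hK : 0 ≤ K) (ha : 0 < a) (hδ₂ : δ₂ < 1)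
    (hcond : δ₁ + a / K ^ 2 * δ₂ < a / K ^ 2 - 1) : K / √a * √(1 + δ₁) < √(1 - δ₂) := by
  rcases hK.eq_or_lt with rfl | hK
  · simpa using Real.sqrt_pos.2 (sub_pos.2 hδ₂)
  have hK2 : 0 < K ^ 2 := by positivity
  have hsq : K ^ 2 * (1 + δ₁) < a * (1 - δ₂) := by
    have := mul_lt_mul_of_pos_right hcond hK2
    field_simp at this
    linarith
  calc K / √a * √(1 + δ₁) = √(K ^ 2 / a * (1 + δ₁)) := by
        rw [Real.sqrt_mul (by positivity), Real.sqrt_div (sq_nonneg K), Real.sqrt_sq hK.le]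
    _ < √(1 - δ₂) := by
        rw [Real.sqrt_lt_sqrt_iff_of_pos (sub_pos.2 hδ₂), div_mul_eq_mul_div, div_lt_iff₀ ha]
        linarith

structure IsBlockIndex {n : ℕ} (N : ℕ) (T : ℕ → Finset (Fin n)) (ℓ : Fin n → ℕ) : Prop where
  le : ∀ i, ℓ i ≤ N
  mem_iff : ∀ i, ∀ k ∈ Icc 1 N, i ∈ T k ↔ ℓ i = k

namespace IsBlockIndex

variable {n N s : ℕ} {T : ℕ → Finset (Fin n)} {ℓ : Fin n → ℕ} {w : ℕ → ℝ}

lemma _root_.exists_isBlockIndex (hT : (Icc 1 N : Set ℕ).PairwiseDisjoint T) :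
    ∃ ℓ, IsBlockIndex N T ℓ := by
  have : ∀ i, ∃ l ≤ N, ∀ k ∈ Icc 1 N, i ∈ T k ↔ l = k := by
    intro i
    by_cases hi : ∃ k ∈ Icc 1 N, i ∈ T k
    · obtain ⟨l, hl, hil⟩ := hi
      refine ⟨l, (mem_Icc.1 hl).2, fun k hk => ⟨fun hik => ?_, fun hlk => hlk ▸ hil⟩⟩
      by_contra hne
      exact disjoint_left.1 (hT (mem_coe.2 hl) (mem_coe.2 hk) hne) hil hik
    · simp only [not_exists, not_and] at hi
      exact ⟨0, N.zero_le, fun k hk =>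
        ⟨fun hik => absurd hik (hi k hk), fun h0 => by simp at hk; omega⟩⟩
  choose ℓ hℓN hℓ using this
  exact ⟨ℓ, ⟨hℓN, hℓ⟩⟩

lemma mem_biUnion_iff (hℓ : IsBlockIndex N T ℓ) {j : ℕ} (hj : 1 ≤ j) {i : Fin n} :
    i ∈ (Icc j N).biUnion T ↔ j ≤ ℓ i := by
  rw [mem_biUnion]
  constructor
  · rintro ⟨k, hk, hik⟩
    have hk' := mem_Icc.1 hk
    rw [(hℓ.mem_iff i k (mem_Icc.2 ⟨hj.trans hk'.1, hk'.2⟩)).1 hik]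
    exact hk'.1
  · intro hji
    exact ⟨ℓ i, mem_Icc.2 ⟨hji, hℓ.le i⟩,
      (hℓ.mem_iff i (ℓ i) (mem_Icc.2 ⟨hj.trans hji, hℓ.le i⟩)).2 rfl⟩

lemma mem_SS_iff (hℓ : IsBlockIndex N T ℓ) {T₀ : Finset (Fin n)} {j : ℕ} (hj : 1 ≤ j)
    {i : Fin n} : i ∈ SS N T T₀ j ↔ (i ∈ T₀ ↔ ℓ i < j) := by
  rw [SS, mem_sdiff, mem_union, ← biUnion_inter, mem_inter, hℓ.mem_biUnion_iff hj]
  by_cases hi : i ∈ T₀ <;> simp [hi]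

lemma sum_mul_eq (hℓ : IsBlockIndex N T ℓ) (S : Finset (Fin n)) (g : ℕ → ℝ) (f : Fin n → ℝ) :
    ∑ i ∈ S, g (ℓ i) * f i =
      ∑ k ∈ Icc 1 N, g k * ∑ i ∈ T k ∩ S, f i +
        g 0 * ∑ i ∈ ((Icc 1 N).biUnion T)ᶜ ∩ S, f i := by
  have hpt : ∀ i, g (ℓ i) = ∑ k ∈ Icc 1 N, (if i ∈ T k then g k else 0) +
      if i ∈ ((Icc 1 N).biUnion T)ᶜ then g 0 else 0 := by
    intro i
    simp only [mem_compl, hℓ.mem_biUnion_iff le_rfl]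
    rw [sum_congr rfl fun k hk => if_congr (hℓ.mem_iff i k hk) rfl rfl, sum_ite_eq]
    rcases Nat.eq_zero_or_pos (ℓ i) with h0 | hpos
    · simp [h0]
    · simp [mem_Icc, hℓ.le i, Nat.one_le_iff_ne_zero.1 hpos]
  simp only [hpt, add_mul, sum_mul, sum_add_distrib, ite_mul, zero_mul]
  rw [sum_comm]
  simp only [sum_ite_mem, ← mul_sum, inter_comm]

lemma wl1_eq (hℓ : IsBlockIndex N T ℓ) (w : ℕ → ℝ) (v : Fin n → ℝ) :
    wl1 N T w v = ∑ i, levelWeight w (ℓ i) * |v i| := by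
  rw [hℓ.sum_mul_eq, wl1]
  simp only [nrm1_restr, inter_univ, levelWeight_zero, one_mul]
  congr 1
  exact sum_congr rfl fun k hk => by
    rw [levelWeight_of_ne_zero w (Nat.one_le_iff_ne_zero.1 (mem_Icc.1 hk).1)]

lemma DD_eq (hℓ : IsBlockIndex N T ℓ) (T₀ : Finset (Fin n)) (w : ℕ → ℝ) (x : Fin n → ℝ) :
    DD N T T₀ w x = wl1 N T w (restr x T₀ᶜ) := by
  have hsplit := hℓ.sum_mul_eq T₀ᶜ (fun _ => 1) fun i => |x i|
  simp only [one_mul] at hsplit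
  have herase : ∀ X : ℕ → ℝ, ∑ k ∈ Icc 1 N, (∑ j ∈ (Icc 1 N).erase k, w j) * X k =
      (∑ j ∈ Icc 1 N, w j) * ∑ k ∈ Icc 1 N, X k - ∑ k ∈ Icc 1 N, w k * X k := fun X => by
    rw [mul_sum, ← sum_sub_distrib]
    exact sum_congr rfl fun k hk => by rw [sum_erase_eq_sub hk, sub_mul]
  simp only [DD, wl1, nrm1_restr, restr_restr, hsplit, herase]
  ring

lemma nrm1_restr_compl_le (hℓ : IsBlockIndex N T ℓ) (hu : ∀ i, 0 ≤ levelWeight w (ℓ i))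
    {x h : Fin n → ℝ} (hmin : wl1 N T w (x + h) ≤ wl1 N T w x) (T₀ : Finset (Fin n)) :
    nrm1 (restr h T₀ᶜ) ≤
      ∑ i, (if i ∈ T₀ then levelWeight w (ℓ i) else 1 - levelWeight w (ℓ i)) *
        |h i| + 2 * wl1 N T w (restr x T₀ᶜ) := by
  rw [hℓ.wl1_eq, hℓ.wl1_eq] at hmin
  have hcone := sum_compl_mul_abs_le hu (by simpa only [Pi.add_apply] using hmin) T₀
  have hsplit : nrm1 (restr h T₀ᶜ) = ∑ i ∈ T₀ᶜ, levelWeight w (ℓ i) * |h i| +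
      ∑ i ∈ T₀ᶜ, (1 - levelWeight w (ℓ i)) * |h i| := by
    rw [nrm1_restr, ← sum_add_distrib]
    exact sum_congr rfl fun i _ => by ring
  have hite : ∑ i, (if i ∈ T₀ then levelWeight w (ℓ i) else
      1 - levelWeight w (ℓ i)) * |h i| = ∑ i ∈ T₀, levelWeight w (ℓ i) * |h i| +
        ∑ i ∈ T₀ᶜ, (1 - levelWeight w (ℓ i)) * |h i| := by
    rw [← sum_add_sum_compl T₀]
    congr 1 <;> refine sum_congr rfl fun i hi => ?_
    · rw [if_pos hi]
    · rw [if_neg (mem_compl.1 hi)]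
  rw [hite, hℓ.wl1_eq, sum_restr x T₀ᶜ (fun i t => levelWeight w (ℓ i) * |t|) (by simp)]
  linarith

lemma sum_ite_mul_abs_eq (hℓ : IsBlockIndex N T ℓ) (hN1 : 1 ≤ N) (T₀ : Finset (Fin n))
    (h : Fin n → ℝ) :
    ∑ i, (if i ∈ T₀ then levelWeight w (ℓ i) else 1 - levelWeight w (ℓ i)) *
        |h i| =
      w N * nrm1 (restr h T₀) + ∑ j ∈ Icc 1 N,
        (levelWeight w (j - 1) - levelWeight w j) * nrm1 (restr h (SS N T T₀ j)) := by
  have hwN : levelWeight w N = w N := levelWeight_of_ne_zero w (by omega)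
  have hpt : ∀ i, (if i ∈ T₀ then levelWeight w (ℓ i) else
      1 - levelWeight w (ℓ i)) = (if i ∈ T₀ then w N else 0) + ∑ j ∈ Icc 1 N,
        if i ∈ SS N T T₀ j then levelWeight w (j - 1) - levelWeight w j
        else 0 := by
    intro i
    rw [ite_eq_ite_add_sum_Icc _ (levelWeight_zero w) (hℓ.le i), hwN]
    congr 1
    exact sum_congr rfl fun j hj => if_congr (hℓ.mem_SS_iff (mem_Icc.1 hj).1).symm rfl rfl
  simp only [hpt, add_mul, sum_mul, sum_add_distrib, ite_mul, zero_mul]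
  rw [sum_comm]
  simp only [sum_ite_mem, univ_inter, ← mul_sum, nrm1_restr]

theorem nrm1_restr_compl_le_KN (hℓ : IsBlockIndex N T ℓ) (hN1 : 1 ≤ N)
    (hT : (Icc 1 N : Set ℕ).PairwiseDisjoint T) {T₀ : Finset (Fin n)} (hT₀ : T₀.card = s)
    {ρ α : ℕ → ℝ}
    (hρ : ∀ i ∈ Icc 1 N, ((T i).card : ℝ) = ρ i * s)
    (hα : ∀ i ∈ Icc 1 N, ((T i ∩ T₀).card : ℝ) = α i * (ρ i * s))
    (hW : AntitoneOn (levelWeight w) (Set.Iic N)) (hwN : 0 ≤ w N)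
    {x h : Fin n → ℝ} (hmin : wl1 N T w (x + h) ≤ wl1 N T w x) {P : ℝ}
    (hT₀P : nrm2 (restr h T₀) ≤ P) (hSP : ∀ j ∈ Icc 1 N, nrm2 (restr h (SS N T T₀ j)) ≤ P) :
    nrm1 (restr h T₀ᶜ) ≤ KN N w ρ α * √s * P + 2 * wl1 N T w (restr x T₀ᶜ) := by
  have hwN' : levelWeight w N = w N := levelWeight_of_ne_zero w (by omega)
  have hu : ∀ i, 0 ≤ levelWeight w (ℓ i) := fun i =>
    hwN.trans (hwN' ▸ hW (Set.mem_Iic.2 (hℓ.le i)) (Set.mem_Iic.2 le_rfl) (hℓ.le i))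
  refine (hℓ.nrm1_restr_compl_le hu hmin T₀).trans (add_le_add_left ?_ _)
  rw [hℓ.sum_ite_mul_abs_eq hN1, KN_eq_sum N w ρ α hN1, add_mul, add_mul, sum_mul, sum_mul]
  refine add_le_add ?_ (sum_le_sum fun j hj => ?_)
  · calc w N * nrm1 (restr h T₀) ≤ w N * (√s * P) := by
          refine mul_le_mul_of_nonneg_left ?_ hwN
          exact hT₀ ▸ (nrm1_restr_le_sqrt_card_mul_nrm2 h T₀).trans
            (mul_le_mul_of_nonneg_left hT₀P (Real.sqrt_nonneg _))
      _ = w N * √s * P := by ring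
  · have hj' := mem_Icc.1 hj
    have hcc : 0 ≤ levelWeight w (j - 1) - levelWeight w j :=
      sub_nonneg.2 (hW (Set.mem_Iic.2 (by omega)) (Set.mem_Iic.2 hj'.2) (Nat.sub_le j 1))
    calc _ ≤ (levelWeight w (j - 1) - levelWeight w j) *
          (√(SS N T T₀ j).card * P) :=
          mul_le_mul_of_nonneg_left ((nrm1_restr_le_sqrt_card_mul_nrm2 h _).trans
            (mul_le_mul_of_nonneg_left (hSP j hj) (Real.sqrt_nonneg _))) hcc
      _ = _ := by
          rw [cast_card_SS hT hT₀ hρ hα hj'.1, Real.sqrt_mul s.cast_nonneg]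
          ring

end IsBlockIndex

theorem weighted_l1_recovery_multi_weight_general
    {m n s N : ℕ} (hs : 0 < s) (hN1 : 1 ≤ N)
    (x : Fin n → ℝ) (T₀ : Finset (Fin n)) (hT₀card : T₀.card = s)
    (T : ℕ → Finset (Fin n))
    (hdisj : ∀ i ∈ Finset.Icc 1 N, ∀ j ∈ Finset.Icc 1 N, i ≠ j → Disjoint (T i) (T j))
    (ρ α : ℕ → ℝ)
    (hρ : ∀ i ∈ Finset.Icc 1 N, ((T i).card : ℝ) = ρ i * s)
    (hα : ∀ i ∈ Finset.Icc 1 N, (((T i) ∩ T₀).card : ℝ) = α i * (ρ i * s))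
    (w : ℕ → ℝ) (hw1 : w 1 ≤ 1) (hwN : 0 ≤ w N)
    (hwmono : ∀ i j, 1 ≤ i → i ≤ j → j ≤ N → w j ≤ w i)
    (a : ℝ) (ha : 1 < a) (as : ℕ) (has : 0 < as) (hasval : (as : ℝ) = a * s)
    (hsum : ∑ i ∈ Finset.Icc 1 N, ρ i * (1 - α i) ≤ a)
    (A : Matrix (Fin m) (Fin n) ℝ) (δas δa1s : ℝ)
    (hδa1s1 : δa1s < 1)
    (hRIP1 : RIPBound A δas as) (hRIP2 : RIPBound A δa1s (as + s))
    (hcond : δas + (a / (KN N w ρ α) ^ 2) * δa1s < a / (KN N w ρ α) ^ 2 - 1)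
    (z : Fin m → ℝ) (ε : ℝ) (hz : nrm2 z ≤ ε)
    (y : Fin m → ℝ) (hy : y = A.mulVec x + z)
    (xh : Fin n → ℝ) (hfeas : nrm2 (A.mulVec xh - y) ≤ ε)
    (hmin : wl1 N T w xh ≤ wl1 N T w x) :
    nrm2 (xh - x) ≤
      2 * (1 + KN N w ρ α / Real.sqrt a) /
          (Real.sqrt (1 - δa1s) - KN N w ρ α / Real.sqrt a * Real.sqrt (1 + δas)) * ε +
      2 / Real.sqrt a * (Real.sqrt (1 - δa1s) + Real.sqrt (1 + δas)) /
          (Real.sqrt (1 - δa1s) - KN N w ρ α / Real.sqrt a * Real.sqrt (1 + δas)) *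
        (Real.sqrt (s : ℝ))⁻¹ *
        ((∑ i ∈ Finset.Icc 1 N, w i) * nrm1 (restr x T₀ᶜ) +
          (1 - ∑ i ∈ Finset.Icc 1 N, w i) *
            nrm1 (restr x (((Finset.Icc 1 N).biUnion T)ᶜ ∩ T₀ᶜ)) -
          ∑ i ∈ Finset.Icc 1 N, (∑ j ∈ (Finset.Icc 1 N).erase i, w j) *
            nrm1 (restr x (T i ∩ T₀ᶜ))) := by
  have hT : (Icc 1 N : Set ℕ).PairwiseDisjoint T := fun i hi j hj hij => hdisj i hi j hj hij
  obtain ⟨ℓ, hℓ⟩ := exists_isBlockIndex hT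
  have hW := antitoneOn_levelWeight (fun i hi j hj hij => hwmono i j hi.1 hij hj.2) hw1
  set h := xh - x with hh
  obtain ⟨T₁, hT₁, hT₁card⟩ := exists_isTopSet (fun i => |h i|) T₀ᶜ (min_le_right as T₀ᶜ.card)
  have hP : ∀ V, (V \ T₀).card ≤ as → nrm2 (restr h V) ≤ nrm2 (restr h (T₀ ∪ T₁)) :=
    fun V => hT₁.nrm2_restr_le hT₁card
  have hcone := hℓ.nrm1_restr_compl_le_KN hN1 hT hT₀card hρ hα hW hwN
    (by rwa [add_sub_cancel]) (hP T₀ (by simp))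
    fun j hj => hP _ (card_SS_sdiff_le_of_sum_le hρ hα hsum hasval (mem_Icc.1 hj).1)
  have hAh : nrm2 (A *ᵥ h) ≤ 2 * ε := by
    have hsplit : A *ᵥ h = (A *ᵥ xh - y) + z := by rw [hh, mulVec_sub, hy]; abel
    linarith [hsplit ▸ nrm2_add_le (A *ᵥ xh - y) z]
  have hsa : √(as : ℝ) = √a * √s := by rw [hasval, Real.sqrt_mul (by linarith)]
  have hsa0 : 0 < √a := Real.sqrt_pos.2 (by linarith)
  have hss0 : 0 < √(s : ℝ) := Real.sqrt_pos.2 (by exact_mod_cast hs)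
  have hK := KN_nonneg ρ α hN1 hW hwN
  have hbound := nrm2_le_of_cone hRIP1 hRIP2 has hT₀card.le hT₁ hT₁card
    (R := 2 / √a * (√s)⁻¹ * wl1 N T w (restr x T₀ᶜ)) (div_nonneg hK hsa0.le)
    (div_sqrt_mul_sqrt_lt hK (by linarith) hδa1s1 hcond) hAh <| by
      rw [hsa, div_le_iff₀ (by positivity)]
      refine hcone.trans_eq ?_
      field_simp
  change _ ≤ _ + _ * DD N T T₀ w x
  rw [hℓ.DD_eq]
  convert hbound using 1
  ring

/-- main recovery guarantee for weighted ℓ1-minimization with `N` distinct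
weights (Theorem: Weighted ℓ1-minimization with N distinct weights). -/
theorem weighted_l1_recovery_multi_weight
    {m n s N : ℕ} (hs : 0 < s) (hN1 : 1 ≤ N) (hNn : N ≤ n)
    (x : Fin n → ℝ) (T₀ : Finset (Fin n)) (hT₀card : T₀.card = s)
    (hT₀top : ∀ i ∉ T₀, ∀ j ∈ T₀, |x i| ≤ |x j|)
    (T : ℕ → Finset (Fin n))
    (hdisj : ∀ i ∈ Finset.Icc 1 N, ∀ j ∈ Finset.Icc 1 N, i ≠ j → Disjoint (T i) (T j))
    (ρ α : ℕ → ℝ)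
    (hρ : ∀ i ∈ Finset.Icc 1 N, ((T i).card : ℝ) = ρ i * s)
    (hα : ∀ i ∈ Finset.Icc 1 N, (((T i) ∩ T₀).card : ℝ) = α i * (ρ i * s))
    (w : ℕ → ℝ) (hw1 : w 1 ≤ 1) (hwN : 0 ≤ w N)
    (hwmono : ∀ i j, 1 ≤ i → i ≤ j → j ≤ N → w j ≤ w i)
    (a : ℝ) (ha : 1 < a) (as : ℕ) (has : 0 < as) (hasval : (as : ℝ) = a * s)
    (hsum : ∑ i ∈ Finset.Icc 1 N, ρ i * (1 - α i) ≤ a)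
    (A : Matrix (Fin m) (Fin n) ℝ) (δas δa1s : ℝ)
    (hδas0 : 0 ≤ δas) (hδas1 : δas < 1) (hδa1s0 : 0 ≤ δa1s) (hδa1s1 : δa1s < 1)
    (hRIP1 : RIPBound A δas as) (hRIP2 : RIPBound A δa1s (as + s))
    (hcond : δas + (a / (KN N w ρ α) ^ 2) * δa1s < a / (KN N w ρ α) ^ 2 - 1)
    (z : Fin m → ℝ) (ε : ℝ) (hz : nrm2 z ≤ ε)
    (y : Fin m → ℝ) (hy : y = A.mulVec x + z)
    (xh : Fin n → ℝ) (hfeas : nrm2 (A.mulVec xh - y) ≤ ε)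
    (hmin : wl1 N T w xh ≤ wl1 N T w x) :
    nrm2 (xh - x) ≤
      2 * (1 + KN N w ρ α / Real.sqrt a) /
          (Real.sqrt (1 - δa1s) - KN N w ρ α / Real.sqrt a * Real.sqrt (1 + δas)) * ε +
      2 / Real.sqrt a * (Real.sqrt (1 - δa1s) + Real.sqrt (1 + δas)) /
          (Real.sqrt (1 - δa1s) - KN N w ρ α / Real.sqrt a * Real.sqrt (1 + δas)) *
        (Real.sqrt (s : ℝ))⁻¹ *
        ((∑ i ∈ Finset.Icc 1 N, w i) * nrm1 (restr x T₀ᶜ) +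
          (1 - ∑ i ∈ Finset.Icc 1 N, w i) *
            nrm1 (restr x (((Finset.Icc 1 N).biUnion T)ᶜ ∩ T₀ᶜ)) -
          ∑ i ∈ Finset.Icc 1 N, (∑ j ∈ (Finset.Icc 1 N).erase i, w j) *
            nrm1 (restr x (T i ∩ T₀ᶜ))) :=
  weighted_l1_recovery_multi_weight_general hs hN1 x T₀ hT₀card T hdisj ρ α hρ hα w hw1 hwN hwmono a
    ha as has hasval hsum A δas δa1s hδa1s1 hRIP1 hRIP2 hcond z ε hz y hy xh hfeas hmin
end

section
/- Let 1 ≥ w₁ ≥ w₂ ≥ … ≥ w_N ≥ 0, let ρ₁,…,ρ_N ≥ 0 with Σ_{i=1}^N ρᵢ = ρ where 1 + ρ(1−2α) ≥ 0, and let α₁ = … = α_N = α with α ≥ 1/2. Define b(w) = w + (1−w)√(1 + ρ − 2αρ) and K_N = w_N + (1−w₁)√(1 + Σ_{i=1}^N(ρᵢ − 2αρᵢ)) + Σ_{j=2}^N (w_{j−1}−w_j)√(1 + Σ_{i=j}^N(ρᵢ − 2αρᵢ)). Then b(w_N) ≤ K_N ≤ b(w₁); consequently, for any a > 0, (a−b(w₁)²)/(a+b(w₁)²)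 ≤ (a−K_N²)/(a+K_N²) ≤ (a−b(w_N)²)/(a+b(w_N)²). -/
/-!
Write `g j = √(1 + ∑_{i=j}^N (ρᵢ - 2αᵢρᵢ))` (`sqrtTail N ρ α j`). When every summand
`ρᵢ - 2αᵢρᵢ` is nonpositive, `g 1 ≤ g j ≤ 1`, and
`K_N = w_N + (1 - w₁) g 1 + ∑_{j≥2} (w_{j-1} - w_j) g j` is a combination of these values
whose nonnegative coefficients `w_{j-1} - w_j` telescope to `w₁ - w_N`. Replacing every `g j`
by `g 1`, resp. by `1`, gives `b(w_N) ≤ K_N ≤ b(w₁)`; the thresholds are then ordered because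
`t ↦ (a - t²) / (a + t²)` is antitone on `[0, ∞)`.
-/

open Finset

lemma sum_Icc_two_sub_telescope {G : Type*} [AddCommGroup G] (f : ℕ → G) {N : ℕ}
    (hN : 1 ≤ N) : ∑ j ∈ Icc 2 N, (f (j - 1) - f j) = f 1 - f N := by
  induction N, hN using Nat.le_induction with
  | base => simp
  | succ n _ ih =>
    rw [sum_Icc_succ_top (by omega), ih]
    simp

section Telescoping

variable {N : ℕ} {w g : ℕ → ℝ}

lemma sub_mul_le_sum_Icc_two_sub_mul (hN : 1 ≤ N) (hw : AntitoneOn w (Set.Icc 1 N)) {lo : ℝ}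
    (hg : ∀ j ∈ Icc 2 N, lo ≤ g j) :
    (w 1 - w N) * lo ≤ ∑ j ∈ Icc 2 N, (w (j - 1) - w j) * g j := by
  rw [← sum_Icc_two_sub_telescope w hN, sum_mul]
  refine sum_le_sum fun j hj => mul_le_mul_of_nonneg_left (hg j hj) ?_
  rw [mem_Icc] at hj
  exact sub_nonneg.2 (hw ⟨by omega, by omega⟩ ⟨by omega, hj.2⟩ (by omega))

lemma sum_Icc_two_sub_mul_le_sub_mul (hN : 1 ≤ N) (hw : AntitoneOn w (Set.Icc 1 N)) {hi : ℝ}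
    (hg : ∀ j ∈ Icc 2 N, g j ≤ hi) :
    ∑ j ∈ Icc 2 N, (w (j - 1) - w j) * g j ≤ (w 1 - w N) * hi := by
  have := sub_mul_le_sum_Icc_two_sub_mul (g := fun j => -g j) hN hw
    (lo := -hi) fun j hj => neg_le_neg (hg j hj)
  simp only [mul_neg, sum_neg_distrib] at this
  linarith

end Telescoping

lemma sum_le_sum_of_subset_of_nonpos {ι : Type*} [DecidableEq ι] {s t : Finset ι} {c : ι → ℝ}
    (hst : s ⊆ t) (hc : ∀ i ∈ t, c i ≤ 0) : ∑ i ∈ t, c i ≤ ∑ i ∈ s, c i := by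
  rw [← sum_sdiff hst]
  linarith [sum_nonpos fun i (hi : i ∈ t \ s) => hc i (mem_sdiff.1 hi).1]

noncomputable def sqrtTail (N : ℕ) (ρ α : ℕ → ℝ) (j : ℕ) : ℝ :=
  √(1 + ∑ i ∈ Icc j N, (ρ i - 2 * α i * ρ i))

section KN

variable {N : ℕ} {w ρ α : ℕ → ℝ}

lemma KN_eq_sqrtTail : KN N w ρ α = w N + (1 - w 1) * sqrtTail N ρ α 1 +
    ∑ j ∈ Icc 2 N, (w (j - 1) - w j) * sqrtTail N ρ α j :=
  rfl

lemma sqrtTail_le_one (hc : ∀ i ∈ Icc 1 N, ρ i - 2 * α i * ρ i ≤ 0) {j : ℕ} (hj : 1 ≤ j) :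
    sqrtTail N ρ α j ≤ 1 := by
  refine Real.sqrt_le_one.2 ?_
  linarith [sum_nonpos fun i hi => hc i (Icc_subset_Icc_left hj hi)]

lemma sqrtTail_one_le (hc : ∀ i ∈ Icc 1 N, ρ i - 2 * α i * ρ i ≤ 0) {j : ℕ} (hj : 1 ≤ j) :
    sqrtTail N ρ α 1 ≤ sqrtTail N ρ α j := by
  refine Real.sqrt_le_sqrt ?_
  gcongr 1 + ?_
  exact sum_le_sum_of_subset_of_nonpos (Icc_subset_Icc_left hj) hc

lemma le_KN (hN : 1 ≤ N) (hw : AntitoneOn w (Set.Icc 1 N))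
    (hc : ∀ i ∈ Icc 1 N, ρ i - 2 * α i * ρ i ≤ 0) :
    w N + (1 - w N) * sqrtTail N ρ α 1 ≤ KN N w ρ α := by
  have := sub_mul_le_sum_Icc_two_sub_mul hN hw fun j hj =>
    sqrtTail_one_le hc (one_le_two.trans (mem_Icc.1 hj).1)
  rw [KN_eq_sqrtTail]
  linarith

lemma KN_le (hN : 1 ≤ N) (hw : AntitoneOn w (Set.Icc 1 N))
    (hc : ∀ i ∈ Icc 1 N, ρ i - 2 * α i * ρ i ≤ 0) :
    KN N w ρ α ≤ w 1 + (1 - w 1) * sqrtTail N ρ α 1 := by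
  have := sum_Icc_two_sub_mul_le_sub_mul hN hw fun j hj =>
    sqrtTail_le_one hc (one_le_two.trans (mem_Icc.1 hj).1)
  rw [KN_eq_sqrtTail]
  linarith

end KN

lemma antitoneOn_sub_sq_div_add_sq {a : ℝ} (ha : 0 < a) :
    AntitoneOn (fun t : ℝ => (a - t ^ 2) / (a + t ^ 2)) (Set.Ici 0) := by
  intro y hy x _ hyx
  have hy : 0 ≤ y := hy
  dsimp only
  rw [div_le_div_iff₀ (by positivity) (by positivity)]
  nlinarith [mul_le_mul hyx hyx hy (hy.trans hyx)]

theorem KN_sandwich_of_alpha_ge_half_general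
    (N : ℕ) (hN : 1 ≤ N) (w : ℕ → ℝ) (hw1 : w 1 ≤ 1) (hwN : 0 ≤ w N)
    (hwmono : ∀ i j, 1 ≤ i → i ≤ j → j ≤ N → w j ≤ w i)
    (ρf : ℕ → ℝ) (hρf : ∀ i ∈ Finset.Icc 1 N, 0 ≤ ρf i)
    (ρ α : ℝ) (hsum : ∑ i ∈ Finset.Icc 1 N, ρf i = ρ)
    (hα : 1 / 2 ≤ α) :
    (w N + (1 - w N) * Real.sqrt (1 + ρ - 2 * α * ρ) ≤ KN N w ρf (fun _ => α)) ∧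
    (KN N w ρf (fun _ => α) ≤ w 1 + (1 - w 1) * Real.sqrt (1 + ρ - 2 * α * ρ)) ∧
    ∀ a : ℝ, 0 < a →
      ((a - (w 1 + (1 - w 1) * Real.sqrt (1 + ρ - 2 * α * ρ)) ^ 2) /
          (a + (w 1 + (1 - w 1) * Real.sqrt (1 + ρ - 2 * α * ρ)) ^ 2) ≤
        (a - (KN N w ρf fun _ => α) ^ 2) / (a + (KN N w ρf fun _ => α) ^ 2)) ∧
      ((a - (KN N w ρf fun _ => α) ^ 2) / (a + (KN N w ρf fun _ => α) ^ 2) ≤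
        (a - (w N + (1 - w N) * Real.sqrt (1 + ρ - 2 * α * ρ)) ^ 2) /
          (a + (w N + (1 - w N) * Real.sqrt (1 + ρ - 2 * α * ρ)) ^ 2)) := by
  have hanti : AntitoneOn w (Set.Icc 1 N) := fun i hi j hj hij => hwmono i j hi.1 hij hj.2
  have hc : ∀ i ∈ Icc 1 N, ρf i - 2 * α * ρf i ≤ 0 := fun i hi => by nlinarith [hρf i hi]
  have htotal : sqrtTail N ρf (fun _ => α) 1 = √(1 + ρ - 2 * α * ρ) := by
    rw [sqrtTail, sum_sub_distrib, ← mul_sum, hsum, add_sub_assoc]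
  have hlow := le_KN (α := fun _ => α) hN hanti hc
  have hhigh := KN_le (α := fun _ => α) hN hanti hc
  rw [htotal] at hlow hhigh
  have hbN : 0 ≤ w N + (1 - w N) * √(1 + ρ - 2 * α * ρ) :=
    add_nonneg hwN <| mul_nonneg (by linarith [hwmono 1 N le_rfl hN le_rfl]) (Real.sqrt_nonneg _)
  have hK : 0 ≤ KN N w ρf fun _ => α := hbN.trans hlow
  refine ⟨hlow, hhigh, fun a ha => ⟨?_, ?_⟩⟩
  · exact antitoneOn_sub_sq_div_add_sq ha hK (hK.trans hhigh) hhigh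
  · exact antitoneOn_sub_sq_div_add_sq ha hbN hK hlow

/-- the sandwich `b(w_N) ≤ K_N ≤ b(w₁)` when `α ≥ 1/2`, and the resulting
ordering of the sufficient RIP thresholds. -/
theorem KN_sandwich_of_alpha_ge_half
    (N : ℕ) (hN : 1 ≤ N) (w : ℕ → ℝ) (hw1 : w 1 ≤ 1) (hwN : 0 ≤ w N)
    (hwmono : ∀ i j, 1 ≤ i → i ≤ j → j ≤ N → w j ≤ w i)
    (ρf : ℕ → ℝ) (hρf : ∀ i ∈ Finset.Icc 1 N, 0 ≤ ρf i)
    (ρ α : ℝ) (hsum : ∑ i ∈ Finset.Icc 1 N, ρf i = ρ)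
    (hpos : 0 ≤ 1 + ρ * (1 - 2 * α)) (hα : 1 / 2 ≤ α) :
    (w N + (1 - w N) * Real.sqrt (1 + ρ - 2 * α * ρ) ≤ KN N w ρf (fun _ => α)) ∧
    (KN N w ρf (fun _ => α) ≤ w 1 + (1 - w 1) * Real.sqrt (1 + ρ - 2 * α * ρ)) ∧
    ∀ a : ℝ, 0 < a →
      ((a - (w 1 + (1 - w 1) * Real.sqrt (1 + ρ - 2 * α * ρ)) ^ 2) /
          (a + (w 1 + (1 - w 1) * Real.sqrt (1 + ρ - 2 * α * ρ)) ^ 2) ≤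
        (a - (KN N w ρf fun _ => α) ^ 2) / (a + (KN N w ρf fun _ => α) ^ 2)) ∧
      ((a - (KN N w ρf fun _ => α) ^ 2) / (a + (KN N w ρf fun _ => α) ^ 2) ≤
        (a - (w N + (1 - w N) * Real.sqrt (1 + ρ - 2 * α * ρ)) ^ 2) /
          (a + (w N + (1 - w N) * Real.sqrt (1 + ρ - 2 * α * ρ)) ^ 2)) :=
  KN_sandwich_of_alpha_ge_half_general N hN w hw1 hwN hwmono ρf hρf ρ α hsum hα
end

section
/- Let 1 ≥ w₁ ≥ w₂ ≥ … ≥ w_N ≥ 0 with w₁ > w_N, let ρ₁,…,ρ_N > 0 with Σ_{i=1}^N ρᵢ = ρ, and let α₁ = … = α_N = α with 0 ≤ α < 1/2. Define b(w) = w + (1−w)√(1 + ρ − 2αρ) and K_N = w_N + (1−w₁)√(1 + Σ_{i=1}^N(ρᵢ − 2αρᵢ)) + Σ_{j=2}^N (w_{j−1}−w_j)√(1 + Σ_{i=j}^N(ρᵢ − 2αρᵢ)). Then b(w₁) < K_N < b(w_N). -/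
open Finset

/-!
Write `K_N = w_N + (1 - w₁) s₁ + ∑_{j=2}^N (w_{j-1} - w_j) s_j` with
`s_j = √(1 + (1 - 2α) ∑_{i=j}^N ρᵢ)`. For `α < 1/2` the tail sums are positive and strictly
decreasing in `j`, so `1 < s_j < s₁` for `2 ≤ j ≤ N`. The coefficients `w_{j-1} - w_j` are
nonnegative and telescope to `w₁ - w_N > 0`, so the last sum lies strictly between `w₁ - w_N`
and `(w₁ - w_N) s₁`; these are exactly the two inequalities `b(w₁) < K_N < b(w_N)`.
-/

theorem sum_Icc_two_sub_pred (w : ℕ → ℝ) {n : ℕ} (hn : 1 ≤ n) :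
    ∑ j ∈ Icc 2 n, (w (j - 1) - w j) = w 1 - w n := by
  induction n, hn using Nat.le_induction with
  | base => simp
  | succ n hn ih =>
    rw [sum_Icc_succ_top (by omega), ih, Nat.add_sub_cancel]
    ring

theorem Finset.sum_mul_lt_sum_mul_of_sum_pos {ι : Type*} {s : Finset ι} {c f g : ι → ℝ}
    (hc : ∀ j ∈ s, 0 ≤ c j) (hsum : 0 < ∑ j ∈ s, c j) (hfg : ∀ j ∈ s, f j < g j) :
    ∑ j ∈ s, c j * f j < ∑ j ∈ s, c j * g j := by
  have hsum' : ∑ j ∈ s, (0 : ℝ) < ∑ j ∈ s, c j := by simpa using hsum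
  obtain ⟨j, hj, hcj⟩ := exists_lt_of_sum_lt hsum'
  exact sum_lt_sum (fun i hi => mul_le_mul_of_nonneg_left (hfg i hi).le (hc i hi))
    ⟨j, hj, mul_lt_mul_of_pos_left (hfg j hj) hcj⟩

section TailSums

variable {r : ℕ → ℝ} {N i j : ℕ}

theorem sum_Icc_pos_of_pos (hr : ∀ k ∈ Icc i N, 0 < r k) (hiN : i ≤ N) :
    0 < ∑ k ∈ Icc i N, r k :=
  sum_pos hr (nonempty_Icc.mpr hiN)

theorem sum_Icc_lt_sum_Icc_of_lt (hr : ∀ k ∈ Icc i N, 0 < r k) (hiN : i ≤ N) (hij : i < j) :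
    ∑ k ∈ Icc j N, r k < ∑ k ∈ Icc i N, r k :=
  sum_lt_sum_of_subset (Icc_subset_Icc_left hij.le) (left_mem_Icc.mpr hiN)
    (fun h => (mem_Icc.mp h).1.not_gt hij) (hr i (left_mem_Icc.mpr hiN))
    (fun k hk _ => (hr k hk).le)

theorem sqrt_one_add_sum_Icc_mem_Ioo (hr : ∀ k ∈ Icc 1 N, 0 < r k) (hj : j ∈ Icc 2 N) :
    √(1 + ∑ k ∈ Icc j N, r k) ∈ Set.Ioo 1 √(1 + ∑ k ∈ Icc 1 N, r k) := by
  obtain ⟨h2j, hjN⟩ := mem_Icc.mp hj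
  have hr_tail : ∀ k ∈ Icc j N, 0 < r k :=
    fun k hk => hr k (Icc_subset_Icc_left (by omega) hk)
  have htail_pos := sum_Icc_pos_of_pos hr_tail hjN
  constructor
  · rw [Real.lt_sqrt zero_le_one]
    linarith
  · apply Real.sqrt_lt_sqrt (by linarith)
    linarith [sum_Icc_lt_sum_Icc_of_lt hr (by omega) (by omega : 1 < j)]

end TailSums

theorem KN_strict_reversal_of_alpha_lt_half_general
    (N : ℕ) (hN : 1 ≤ N) (w : ℕ → ℝ)
    (hwmono : ∀ i j, 1 ≤ i → i ≤ j → j ≤ N → w j ≤ w i) (hwstrict : w N < w 1)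
    (ρf : ℕ → ℝ) (hρf : ∀ i ∈ Finset.Icc 1 N, 0 < ρf i)
    (ρ α : ℝ) (hsum : ∑ i ∈ Finset.Icc 1 N, ρf i = ρ)
    (hα : α < 1 / 2) :
    (w 1 + (1 - w 1) * Real.sqrt (1 + ρ - 2 * α * ρ) < KN N w ρf (fun _ => α)) ∧
    (KN N w ρf (fun _ => α) < w N + (1 - w N) * Real.sqrt (1 + ρ - 2 * α * ρ)) := by
  set s : ℕ → ℝ := fun j => √(1 + ∑ i ∈ Icc j N, (ρf i - 2 * α * ρf i))
  have hr : ∀ i ∈ Icc 1 N, 0 < ρf i - 2 * α * ρf i := fun i hi => by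
    nlinarith [hρf i hi]
  have hs₁ : s 1 = √(1 + ρ - 2 * α * ρ) := by
    simp only [s, sum_sub_distrib, ← mul_sum, hsum, add_sub_assoc]
  have hc : ∀ j ∈ Icc 2 N, 0 ≤ w (j - 1) - w j := fun j hj => by
    obtain ⟨h2j, hjN⟩ := mem_Icc.mp hj
    linarith [hwmono (j - 1) j (by omega) (by omega) hjN]
  have hcsum : 0 < ∑ j ∈ Icc 2 N, (w (j - 1) - w j) := by
    rw [sum_Icc_two_sub_pred w hN]
    linarith
  have hlower := sum_mul_lt_sum_mul_of_sum_pos hc hcsum (f := fun _ => 1) (g := s)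
    fun j hj => (sqrt_one_add_sum_Icc_mem_Ioo hr hj).1
  have hupper := sum_mul_lt_sum_mul_of_sum_pos hc hcsum (f := s) (g := fun _ => s 1)
    fun j hj => (sqrt_one_add_sum_Icc_mem_Ioo hr hj).2
  simp only [mul_one, ← sum_mul, sum_Icc_two_sub_pred w hN] at hlower hupper
  rw [KN, ← hs₁]
  constructor <;> linarith

/-- strict reversal of the sandwich when `α < 1/2` (and the weights are
not all equal, with all `ρᵢ` positive). -/
theorem KN_strict_reversal_of_alpha_lt_half
    (N : ℕ) (hN : 1 ≤ N) (w : ℕ → ℝ) (hw1 : w 1 ≤ 1) (hwN : 0 ≤ w N)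
    (hwmono : ∀ i j, 1 ≤ i → i ≤ j → j ≤ N → w j ≤ w i) (hwstrict : w N < w 1)
    (ρf : ℕ → ℝ) (hρf : ∀ i ∈ Finset.Icc 1 N, 0 < ρf i)
    (ρ α : ℝ) (hsum : ∑ i ∈ Finset.Icc 1 N, ρf i = ρ)
    (hα0 : 0 ≤ α) (hα : α < 1 / 2) :
    (w 1 + (1 - w 1) * Real.sqrt (1 + ρ - 2 * α * ρ) < KN N w ρf (fun _ => α)) ∧
    (KN N w ρf (fun _ => α) < w N + (1 - w N) * Real.sqrt (1 + ρ - 2 * α * ρ)) :=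
  KN_strict_reversal_of_alpha_lt_half_general N hN w hwmono hwstrict ρf hρf ρ α hsum hα
end

section
/- Let w ∈ [0,1), and let ρ₁, ρ₂ ≥ 0 with ρ₁ + ρ₂ ≤ 1. Define γ = 2w − 1 + (1−w)(√(1−ρ₁) + √(1−ρ₂)) and b = w + (1−w)√(1 − ρ₁ − ρ₂). Then γ ≥ b, with equality if and only if ρ₁ρ₂ = 0. -/
/-!
Write `u = √(1 - ρ₁)`, `v = √(1 - ρ₂)`, `t = √(1 - ρ₁ - ρ₂)`. Then `γ - b = (1 - w)(u + v - 1 - t)`,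
and `(u + v)² - (1 + t)² = 2(uv - t)` while `(uv)² - t² = ρ₁ρ₂`. Since all quantities are
nonnegative, the sign of `u + v - 1 - t`, and whether it vanishes, is that of `ρ₁ρ₂`.
-/

namespace Real

section

variable {a b : ℝ} (ha : 0 ≤ a) (hb : 0 ≤ b) (hab : a + b ≤ 1)
include ha hb hab

theorem sqrt_one_sub_sub_le_sqrt_mul_sqrt : √(1 - a - b) ≤ √(1 - a) * √(1 - b) := by
  rw [← sqrt_mul (by linarith)]
  exact sqrt_le_sqrt (by nlinarith [mul_nonneg ha hb])

theorem sqrt_one_sub_sub_eq_sqrt_mul_sqrt_iff :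
    √(1 - a - b) = √(1 - a) * √(1 - b) ↔ a * b = 0 := by
  rw [← sqrt_mul (by linarith), sqrt_inj (by linarith) (mul_nonneg (by linarith) (by linarith))]
  constructor <;> intro h <;> linarith

theorem sq_sqrt_add_sqrt_sub_sq_one_add_sqrt :
    (√(1 - a) + √(1 - b)) ^ 2 - (1 + √(1 - a - b)) ^ 2
      = 2 * (√(1 - a) * √(1 - b) - √(1 - a - b)) := by
  have hu := sq_sqrt (show 0 ≤ 1 - a by linarith)
  have hv := sq_sqrt (show 0 ≤ 1 - b by linarith)
  have ht := sq_sqrt (show 0 ≤ 1 - a - b by linarith)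
  linear_combination hu + hv - ht

theorem one_add_sqrt_le_sqrt_add_sqrt : 1 + √(1 - a - b) ≤ √(1 - a) + √(1 - b) := by
  rw [← sq_le_sq₀ (by positivity) (by positivity), ← sub_nonneg,
    sq_sqrt_add_sqrt_sub_sq_one_add_sqrt ha hb hab]
  have := sqrt_one_sub_sub_le_sqrt_mul_sqrt ha hb hab
  linarith

theorem sqrt_add_sqrt_eq_one_add_sqrt_iff :
    √(1 - a) + √(1 - b) = 1 + √(1 - a - b) ↔ a * b = 0 := by
  rw [← sqrt_one_sub_sub_eq_sqrt_mul_sqrt_iff ha hb hab, ← sq_eq_sq₀ (by positivity) (by positivity),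
    ← sub_eq_zero, sq_sqrt_add_sqrt_sub_sq_one_add_sqrt ha hb hab]
  constructor <;> intro h <;> linarith

end

end Real

theorem gamma_ge_b_general
    (w ρ₁ ρ₂ : ℝ) (hw1 : w < 1)
    (hρ₁ : 0 ≤ ρ₁) (hρ₂ : 0 ≤ ρ₂) (hρsum : ρ₁ + ρ₂ ≤ 1) :
    (w + (1 - w) * Real.sqrt (1 - ρ₁ - ρ₂) ≤
      2 * w - 1 + (1 - w) * (Real.sqrt (1 - ρ₁) + Real.sqrt (1 - ρ₂))) ∧
    (2 * w - 1 + (1 - w) * (Real.sqrt (1 - ρ₁) + Real.sqrt (1 - ρ₂)) =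
        w + (1 - w) * Real.sqrt (1 - ρ₁ - ρ₂) ↔ ρ₁ * ρ₂ = 0) := by
  have hw : 0 < 1 - w := sub_pos.2 hw1
  have hγb : 2 * w - 1 + (1 - w) * (√(1 - ρ₁) + √(1 - ρ₂)) - (w + (1 - w) * √(1 - ρ₁ - ρ₂))
      = (1 - w) * (√(1 - ρ₁) + √(1 - ρ₂) - (1 + √(1 - ρ₁ - ρ₂))) := by ring
  constructor
  · rw [← sub_nonneg, hγb]
    exact mul_nonneg hw.le (sub_nonneg.2 (Real.one_add_sqrt_le_sqrt_add_sqrt hρ₁ hρ₂ hρsum))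
  · rw [← sub_eq_zero, hγb, mul_eq_zero, or_iff_right hw.ne', sub_eq_zero,
      Real.sqrt_add_sqrt_eq_one_add_sqrt_iff hρ₁ hρ₂ hρsum]

/-- the Mansour–Yilmaz constant `γ` dominates the single-weight constant
`b`, with equality iff `ρ₁ρ₂ = 0`. -/
theorem gamma_ge_b
    (w ρ₁ ρ₂ : ℝ) (hw0 : 0 ≤ w) (hw1 : w < 1)
    (hρ₁ : 0 ≤ ρ₁) (hρ₂ : 0 ≤ ρ₂) (hρsum : ρ₁ + ρ₂ ≤ 1) :
    (w + (1 - w) * Real.sqrt (1 - ρ₁ - ρ₂) ≤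
      2 * w - 1 + (1 - w) * (Real.sqrt (1 - ρ₁) + Real.sqrt (1 - ρ₂))) ∧
    (2 * w - 1 + (1 - w) * (Real.sqrt (1 - ρ₁) + Real.sqrt (1 - ρ₂)) =
        w + (1 - w) * Real.sqrt (1 - ρ₁ - ρ₂) ↔ ρ₁ * ρ₂ = 0) :=
  gamma_ge_b_general w ρ₁ ρ₂ hw1 hρ₁ hρ₂ hρsum
end
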